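/- arXiv:2407.10577 — 3 statements merged into one kernel-verified Lean document; each statement's English description precedes it below -/
import Mathlib

section
/- For p ∈ (0,1] and n ∈ ℕ, if Z is a Binomial(n, p) random variable, then E[1/(2+Z)] = ((1-p)^(n+2) + (n+2)p - 1) / ((n+1)(n+2)p²). -/
lemma binom_sum_one (p : ℝ) (m : ℕ) :
    ∑ j ∈ Finset.range (m + 1), (m.choose j : ℝ) * p ^ j * (1 - p) ^ (m - j) = 1 := by
  have h := add_pow p (1 - p) m
  have hp : p + (1 - p) = 1 := by ring
  rw [hp, one_pow] at h
  rw [show ∑ j ∈ Finset.range (m + 1), (m.choose j : ℝ) * p ^ j * (1 - p) ^ (m - j)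
      = ∑ j ∈ Finset.range (m + 1), p ^ j * (1 - p) ^ (m - j) * (m.choose j : ℝ) from
    Finset.sum_congr rfl (fun k _ => by ring), ← h]

lemma binom_sum_mean (p : ℝ) (m : ℕ) :
    ∑ j ∈ Finset.range (m + 1), (j : ℝ) * (m.choose j : ℝ) * p ^ j * (1 - p) ^ (m - j)
      = m * p := by
  cases m with
  | zero => simp
  | succ s =>
    rw [Finset.sum_range_succ']
    simp only [Nat.cast_zero, zero_mul, add_zero]
    have key : ∀ k : ℕ, ((k : ℝ) + 1) * ((s + 1).choose (k + 1) : ℝ)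
        = (s + 1) * (s.choose k : ℝ) := by
      intro k
      have := Nat.add_one_mul_choose_eq s k
      have h2 : ((Nat.succ s * s.choose k : ℕ) : ℝ) = (((s+1).choose (k+1) * (k+1) : ℕ) : ℝ) := by
        exact_mod_cast congrArg (Nat.cast : ℕ → ℝ) this
      push_cast at h2
      linarith [h2]
    have : ∀ k ∈ Finset.range (s + 1),
        ((k+1 : ℕ) : ℝ) * ((s + 1).choose (k + 1) : ℝ) * p ^ (k+1) * (1 - p) ^ (s + 1 - (k+1))
        = ((s:ℝ) + 1) * p * ((s.choose k : ℝ) * p ^ k * (1 - p) ^ (s - k)) := by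
      intro k _
      have hexp : s + 1 - (k + 1) = s - k := by omega
      rw [hexp]
      push_cast
      rw [show ((k:ℝ) + 1) * ((s + 1).choose (k + 1) : ℝ) * p ^ (k+1) * (1 - p) ^ (s - k)
          = (((k:ℝ) + 1) * ((s + 1).choose (k + 1) : ℝ)) * p ^ (k+1) * (1 - p) ^ (s - k) from by ring,
        key k]
      ring
    rw [Finset.sum_congr rfl this, ← Finset.mul_sum, binom_sum_one p s]
    push_cast
    ring

/-- For `p ∈ (0,1]` and a Binomial(n,p) random variable `Z`,
`E[1/(2+Z)] = ((1-p)^(n+2) + (n+2)p - 1) / ((n+1)(n+2)p²)`, as a finite sum identity. -/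
theorem binomial_expectation_one_div_two_add (p : ℝ) (hp0 : 0 < p) (hp1 : p ≤ 1) (n : ℕ) :
    ∑ k ∈ Finset.range (n + 1),
      (n.choose k : ℝ) * p ^ k * (1 - p) ^ (n - k) / (k + 2)
      = ((1 - p) ^ (n + 2) + (n + 2) * p - 1) / ((n + 1) * (n + 2) * p ^ 2) := by
  have hD : ((n : ℝ) + 1) * ((n : ℝ) + 2) * p ^ 2 ≠ 0 := by positivity
  rw [eq_div_iff hD, Finset.sum_mul]
  -- g j = ((j:ℝ) - 1) * C(n+2,j) * p^j * (1-p)^(n+2-j)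
  set g : ℕ → ℝ := fun j => ((j : ℝ) - 1) * ((n + 2).choose j : ℝ) * p ^ j * (1 - p) ^ (n + 2 - j)
    with hg
  have hterm : ∀ k ∈ Finset.range (n + 1),
      (n.choose k : ℝ) * p ^ k * (1 - p) ^ (n - k) / (k + 2) * (((n : ℝ) + 1) * ((n : ℝ) + 2) * p ^ 2)
      = g (k + 2) := by
    intro k hk
    have hc : ((n : ℝ) + 1) * ((n : ℝ) + 2) * (n.choose k : ℝ)
        = ((k : ℝ) + 1) * ((k : ℝ) + 2) * ((n + 2).choose (k + 2) : ℝ) := by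
      have h1 := Nat.add_one_mul_choose_eq n k
      have h2 := Nat.add_one_mul_choose_eq (n + 1) (k + 1)
      have h1' : ((n:ℝ) + 1) * (n.choose k : ℝ) = ((n+1).choose (k+1) : ℝ) * ((k:ℝ) + 1) := by
        exact_mod_cast congrArg (Nat.cast : ℕ → ℝ) h1
      have h2' : ((n:ℝ) + 2) * ((n+1).choose (k+1) : ℝ) = ((n+2).choose (k+2) : ℝ) * ((k:ℝ) + 2) := by
        exact_mod_cast congrArg (Nat.cast : ℕ → ℝ) h2
      nlinarith [h1', h2']
    have hexp : n + 2 - (k + 2) = n - k := by omega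
    have hk2 : ((k : ℝ) + 2) ≠ 0 := by positivity
    rw [hg]
    simp only
    rw [hexp]
    push_cast
    rw [div_mul_eq_mul_div, div_eq_iff hk2]
    linear_combination (p ^ k * (1 - p) ^ (n - k) * p ^ 2) * hc
  rw [Finset.sum_congr rfl hterm]
  have hsplit : ∑ j ∈ Finset.range (n + 3), g j
      = (∑ k ∈ Finset.range (n + 1), g (k + 2)) + g 1 + g 0 := by
    rw [Finset.sum_range_succ' g (n + 2), Finset.sum_range_succ' (fun i => g (i + 1)) (n + 1)]
  have hg0 : g 0 = -(1 - p) ^ (n + 2) := by simp [hg]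
  have hg1 : g 1 = 0 := by simp [hg]
  have htot : ∑ j ∈ Finset.range (n + 3), g j = ((n : ℝ) + 2) * p - 1 := by
    have hB := binom_sum_mean p (n + 2)
    have hA := binom_sum_one p (n + 2)
    have : ∀ j ∈ Finset.range (n + 3), g j
        = (j : ℝ) * ((n + 2).choose j : ℝ) * p ^ j * (1 - p) ^ (n + 2 - j)
          - ((n + 2).choose j : ℝ) * p ^ j * (1 - p) ^ (n + 2 - j) := by
      intro j _; rw [hg]; ring
    rw [Finset.sum_congr rfl this, Finset.sum_sub_distrib]
    rw [show n + 3 = (n + 2) + 1 from rfl, hB, hA]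
    push_cast
    ring
  have : (∑ k ∈ Finset.range (n + 1), g (k + 2))
      = ((n : ℝ) + 2) * p - 1 + (1 - p) ^ (n + 2) := by
    have := hsplit
    rw [htot] at this
    rw [hg0, hg1] at this
    linarith
  rw [this]
  push_cast
  ring
end

section
/- Let n ≥ 3, p ∈ (0,1), and X₁,...,Xₙ i.i.d. Bernoulli(p). For any j ∈ {2,...,n-1}, E[X_{j-1}Xⱼ/(X₁+...+X_{n-1}) | X₁+...+X_{n-1} ≠ 0] = (p/(1-(1-p)^{n-1}) - 1/(n-1))/(n-2). -/
/-- Probability weight of a Bernoulli(p) outcome. -/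
def bw (p : ℝ) (b : Bool) : ℝ := if b then p else 1 - p

/-- The 0/1 real value of the `j`-th coordinate (0-based) of `x`, or `0` if out of range. -/
def bval {n : ℕ} (x : Fin n → Bool) (j : ℕ) : ℝ :=
  if h : j < n then (if x ⟨j, h⟩ then 1 else 0) else 0

/-!
Let `S` be the number of successes among the first `n - 1` trials. Summing `X_a X_b / S` over
the ordered pairs `a ≠ b` of these trials gives `(S² - S) / S = S - 1` on `{S ≠ 0}` (and `0`
on `{S = 0}`), so these `(n - 1)(n - 2)` expectations add up to
`E[S] - P(S ≠ 0) = (n - 1) p - (1 - (1 - p) ^ (n - 1))`. A permutation of the trials that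
preserves the first `n - 1` of them preserves the product law and `S`, so all the pairs
contribute equally; dividing by `P(S ≠ 0)` gives the formula.
-/

open Finset

section BernoulliProduct

variable {ι : Type*} [Fintype ι] [DecidableEq ι] (p : ℝ)

noncomputable def bernoulliExpectation (f : (ι → Bool) → ℝ) : ℝ :=
  ∑ x, (∏ i, bw p (x i)) * f x

theorem bernoulliExpectation_sub (f g : (ι → Bool) → ℝ) :
    bernoulliExpectation p (fun x => f x - g x)
      = bernoulliExpectation p f - bernoulliExpectation p g := by
  simp only [bernoulliExpectation, mul_sub, sum_sub_distrib]

theorem bernoulliExpectation_sum {κ : Type*} (t : Finset κ) (f : κ → (ι → Bool) → ℝ) :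
    bernoulliExpectation p (fun x => ∑ k ∈ t, f k x)
      = ∑ k ∈ t, bernoulliExpectation p (f k) := by
  simp only [bernoulliExpectation, mul_sum]
  exact sum_comm

theorem bernoulliExpectation_prod (g : ι → Bool → ℝ) :
    bernoulliExpectation p (fun x => ∏ i, g i (x i))
      = ∏ i, (p * g i true + (1 - p) * g i false) := by
  simp only [bernoulliExpectation, ← prod_mul_distrib]
  rw [← Fintype.prod_sum (fun i c => bw p c * g i c)]
  simp [bw]

theorem bernoulliExpectation_forall_eq (s : Finset ι) (b : Bool) :
    bernoulliExpectation p (fun x => if ∀ i ∈ s, x i = b then 1 else 0) = bw p b ^ #s := by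
  have hind (x : ι → Bool) : (if ∀ i ∈ s, x i = b then (1 : ℝ) else 0)
      = ∏ i, if i ∈ s then (if x i = b then 1 else 0) else 1 := by
    rw [prod_ite_mem, univ_inter, prod_boole]
    congr
  have hfactor (i : ι) : p * (if i ∈ s then (if true = b then 1 else 0) else 1)
      + (1 - p) * (if i ∈ s then (if false = b then 1 else 0) else 1)
      = if i ∈ s then bw p b else 1 := by
    by_cases hi : i ∈ s <;> cases b <;> simp [hi, bw]
  simp only [hind]
  rw [bernoulliExpectation_prod p (fun i c => if i ∈ s then (if c = b then 1 else 0) else 1)]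
  simp only [hfactor, prod_ite_mem, univ_inter, prod_const]

theorem bernoulliExpectation_one : bernoulliExpectation p (fun (_ : ι → Bool) => 1) = 1 := by
  simpa using bernoulliExpectation_prod p (fun _ _ => 1)

theorem bernoulliExpectation_coord (a : ι) :
    bernoulliExpectation p (fun x => if x a then 1 else 0) = p := by
  simpa [bw] using bernoulliExpectation_forall_eq p {a} true

theorem bernoulliExpectation_comp_perm (σ : Equiv.Perm ι) (f : (ι → Bool) → ℝ) :
    bernoulliExpectation p (fun x => f (x ∘ σ)) = bernoulliExpectation p f := by
  refine Fintype.sum_equiv (σ.symm.arrowCongr (Equiv.refl Bool)) _ _ fun x => ?_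
  have hx : σ.symm.arrowCongr (Equiv.refl Bool) x = x ∘ σ := by ext; simp [Equiv.arrowCongr]
  rw [hx, ← Equiv.prod_comp σ (fun i => bw p (x i))]
  rfl

end BernoulliProduct

section TrueCount

variable {ι : Type*} (s : Finset ι)

def trueCount (x : ι → Bool) : ℕ := #{i ∈ s | x i}

theorem trueCount_eq_sum (x : ι → Bool) :
    (trueCount s x : ℝ) = ∑ i ∈ s, if x i then 1 else 0 := by
  rw [trueCount, sum_boole]

theorem trueCount_eq_zero_iff (x : ι → Bool) :
    trueCount s x = 0 ↔ ∀ i ∈ s, x i = false := by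
  simp [trueCount, filter_eq_empty_iff]

theorem trueCount_comp_perm {σ : Equiv.Perm ι} (hσ : ∀ i, σ i ∈ s ↔ i ∈ s)
    (x : ι → Bool) : trueCount s (x ∘ σ) = trueCount s x := by
  refine card_nbij' σ σ.symm ?_ ?_ ?_ ?_ <;> intro i <;> simp [hσ, ← hσ (σ.symm i)]

variable [Fintype ι] [DecidableEq ι] (p : ℝ)

theorem bernoulliExpectation_trueCount :
    bernoulliExpectation p (fun x => (trueCount s x : ℝ)) = #s * p := by
  simp only [trueCount_eq_sum, bernoulliExpectation_sum, bernoulliExpectation_coord, sum_const,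
    nsmul_eq_mul]

theorem bernoulliExpectation_trueCount_ne_zero :
    bernoulliExpectation p (fun x => if trueCount s x ≠ 0 then 1 else 0) = 1 - (1 - p) ^ #s := by
  have hind (x : ι → Bool) : (if trueCount s x ≠ 0 then (1 : ℝ) else 0)
      = 1 - if ∀ i ∈ s, x i = false then 1 else 0 := by
    simp only [ne_eq, ← trueCount_eq_zero_iff]; split_ifs <;> norm_num
  simp only [hind, bernoulliExpectation_sub p (fun _ => 1), bernoulliExpectation_forall_eq,
    bernoulliExpectation_one, bw, Bool.false_eq_true, if_false]

end TrueCount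

section PairRatio

variable {ι : Type*} (s : Finset ι)

/-- Since `t / 0 = 0` in Lean, this vanishes on `{trueCount s x = 0}` without a guard. -/
noncomputable def pairRatio (a b : ι) (x : ι → Bool) : ℝ :=
  (if x a then 1 else 0) * (if x b then 1 else 0) / trueCount s x

theorem pairRatio_comp_perm {σ : Equiv.Perm ι} (hσ : ∀ i, σ i ∈ s ↔ i ∈ s) (a b : ι)
    (x : ι → Bool) : pairRatio s a b (x ∘ σ) = pairRatio s (σ a) (σ b) x := by
  simp only [pairRatio, trueCount_comp_perm s hσ, Function.comp_apply]

theorem sum_offDiag_pairRatio (x : ι → Bool) :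
    ∑ ab ∈ s.offDiag, pairRatio s ab.1 ab.2 x
      = trueCount s x - if trueCount s x ≠ 0 then 1 else 0 := by
  have hpairs : ∑ ab ∈ s.offDiag, (if x ab.1 then (1 : ℝ) else 0) * (if x ab.2 then 1 else 0)
      = (trueCount s x * trueCount s x - trueCount s x : ℕ) := by
    rw [trueCount, ← offDiag_card]
    simp only [ite_zero_mul_ite_zero, mul_one, sum_boole]
    congr 2
    ext ab
    simp only [mem_filter, mem_offDiag]
    tauto
  simp only [pairRatio, ← sum_div, hpairs]
  obtain hk | hk := eq_or_ne (trueCount s x) 0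
  · simp [hk]
  · rw [Nat.cast_sub (Nat.le_mul_self _), if_pos hk]
    push_cast
    field_simp

variable [DecidableEq ι]

theorem swap_apply_mem_iff {u v : ι} (hu : u ∈ s) (hv : v ∈ s) (i : ι) :
    Equiv.swap u v i ∈ s ↔ i ∈ s := by
  rw [Equiv.swap_apply_def]
  split_ifs <;> simp_all

variable [Fintype ι] (p : ℝ)

theorem bernoulliExpectation_pairRatio_swap {u v : ι} (hu : u ∈ s) (hv : v ∈ s) (a b : ι) :
    bernoulliExpectation p (pairRatio s (Equiv.swap u v a) (Equiv.swap u v b))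
      = bernoulliExpectation p (pairRatio s a b) := by
  rw [← bernoulliExpectation_comp_perm p (Equiv.swap u v) (pairRatio s a b)]
  simp only [pairRatio_comp_perm s (swap_apply_mem_iff s hu hv)]

theorem bernoulliExpectation_pairRatio_eq {a b a' b' : ι} (hab : (a, b) ∈ s.offDiag)
    (hab' : (a', b') ∈ s.offDiag) :
    bernoulliExpectation p (pairRatio s a b) = bernoulliExpectation p (pairRatio s a' b') := by
  obtain ⟨ha, hb, hne⟩ := mem_offDiag.1 hab
  obtain ⟨ha', hb', hne'⟩ := mem_offDiag.1 hab'
  -- `swap a a'` carries `(a, b)` to `(a', c)` with `c ≠ a'`, and then `swap c b'` fixes `a'`.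
  set c := Equiv.swap a a' b
  have hc : c ∈ s := (swap_apply_mem_iff s ha ha' b).2 hb
  have hca' : c ≠ a' := by
    simpa [c, Equiv.swap_apply_eq_iff] using hne.symm
  have h₁ := bernoulliExpectation_pairRatio_swap s p ha ha' a b
  have h₂ := bernoulliExpectation_pairRatio_swap s p hc hb' a' c
  rw [Equiv.swap_apply_left] at h₁
  rw [Equiv.swap_apply_of_ne_of_ne hca'.symm hne', Equiv.swap_apply_left] at h₂
  rw [← h₁, ← h₂]

theorem offDiag_card_mul_bernoulliExpectation_pairRatio {a b : ι} (hab : (a, b) ∈ s.offDiag) :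
    #s.offDiag * bernoulliExpectation p (pairRatio s a b) = #s * p - (1 - (1 - p) ^ #s) := by
  calc _ = ∑ ab ∈ s.offDiag, bernoulliExpectation p (pairRatio s ab.1 ab.2) := by
        rw [sum_congr rfl fun ab hab' => bernoulliExpectation_pairRatio_eq s p hab' hab, sum_const,
          nsmul_eq_mul]
    _ = bernoulliExpectation p (fun x => trueCount s x - if trueCount s x ≠ 0 then 1 else 0) := by
        rw [← bernoulliExpectation_sum]
        simp only [sum_offDiag_pairRatio]
    _ = _ := by
        rw [bernoulliExpectation_sub, bernoulliExpectation_trueCount,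
          bernoulliExpectation_trueCount_ne_zero]

theorem bernoulliExpectation_pairRatio_div (hp0 : 0 < p) (hp1 : p < 1) {a b : ι}
    (hab : (a, b) ∈ s.offDiag) :
    bernoulliExpectation p (pairRatio s a b)
        / bernoulliExpectation p (fun x => if trueCount s x ≠ 0 then 1 else 0)
      = (p / (1 - (1 - p) ^ #s) - 1 / #s) / (#s - 1) := by
  obtain ⟨ha, hb, hne⟩ := mem_offDiag.1 hab
  have hs : 2 ≤ #s := one_lt_card.2 ⟨a, ha, b, hb, hne⟩
  have hs' : (2 : ℝ) ≤ #s := by exact_mod_cast hs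
  have hD : 1 - (1 - p) ^ #s ≠ 0 :=
    (sub_pos.2 (pow_lt_one₀ (by linarith) (by linarith) (by omega))).ne'
  have hs0 : (#s : ℝ) ≠ 0 := by linarith
  have hs1 : (#s : ℝ) - 1 ≠ 0 := by linarith
  have hpairs := offDiag_card_mul_bernoulliExpectation_pairRatio s p hab
  rw [offDiag_card, Nat.cast_sub (Nat.le_mul_self _)] at hpairs
  push_cast at hpairs
  rw [bernoulliExpectation_trueCount_ne_zero]
  field_simp
  linear_combination hpairs

end PairRatio

theorem bval_eq_ite {n : ℕ} (x : Fin n → Bool) {i : ℕ} (hi : i < n) :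
    bval x i = if x ⟨i, hi⟩ then 1 else 0 :=
  dif_pos hi

theorem sum_range_bval_eq_trueCount {n m : ℕ} (hmn : m ≤ n) (x : Fin n → Bool) :
    ∑ i ∈ range m, bval x i = trueCount (univ.map (Fin.castLEEmb hmn)) x := by
  rw [trueCount_eq_sum, sum_map, ← Fin.sum_univ_eq_sum_range]
  exact sum_congr rfl fun i _ => bval_eq_ite x (i.isLt.trans_le hmn)

/-- For `j ∈ {2,...,n-1}`,
`E[X_{j-1}Xⱼ/(X₁+...+X_{n-1}) | X₁+...+X_{n-1} ≠ 0]
  = (p/(1-(1-p)^(n-1)) - 1/(n-1))/(n-2)`.  (`X_j` is the coordinate `j-1` of `x`.) -/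
theorem hot_hand_middle_term (n : ℕ) (hn : 3 ≤ n) (p : ℝ) (hp0 : 0 < p) (hp1 : p < 1)
    (j : ℕ) (hj2 : 2 ≤ j) (hjn : j ≤ n - 1) :
    (∑ x : Fin n → Bool, (∏ i, bw p (x i)) *
        (if (∑ i ∈ Finset.range (n - 1), bval x i) ≠ 0 then
          bval x (j - 2) * bval x (j - 1) / (∑ i ∈ Finset.range (n - 1), bval x i)
        else 0)) /
      (∑ x : Fin n → Bool, (∏ i, bw p (x i)) *
        (if (∑ i ∈ Finset.range (n - 1), bval x i) ≠ 0 then 1 else 0))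
      = (p / (1 - (1 - p) ^ (n - 1)) - 1 / (n - 1)) / (n - 2) := by
  have hmn : n - 1 ≤ n := Nat.sub_le n 1
  simp only [sum_range_bval_eq_trueCount hmn, Nat.cast_ne_zero]
  set s : Finset (Fin n) := univ.map (Fin.castLEEmb hmn)
  have hs : #s = n - 1 := by simp [s]
  set a : Fin n := ⟨j - 2, by omega⟩
  set b : Fin n := ⟨j - 1, by omega⟩
  have hab : (a, b) ∈ s.offDiag := by
    simp only [mem_offDiag, s, mem_map, mem_univ, true_and, ne_eq, a, b, Fin.ext_iff]
    exact ⟨⟨⟨j - 2, by omega⟩, rfl⟩, ⟨⟨j - 1, by omega⟩, rfl⟩, by omega⟩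
  have hnum (x : Fin n → Bool) : (if trueCount s x ≠ 0 then
      bval x (j - 2) * bval x (j - 1) / trueCount s x else 0) = pairRatio s a b x := by
    rw [pairRatio, bval_eq_ite x (by omega), bval_eq_ite x (by omega)]
    split_ifs <;> simp_all
  simp only [hnum, ← bernoulliExpectation.eq_1]
  rw [bernoulliExpectation_pairRatio_div s p hp0 hp1 hab, hs, Nat.cast_sub (by omega)]
  push_cast
  ring
end

section
/- For n ≥ 3 and p ∈ (0,1), the inequality p/(1-(1-p)^{n-1}) + (p-1)/(n-1) < p holds. -/
/-- The hot hand statistic is biased downward: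
`p/(1-(1-p)^(n-1)) + (p-1)/(n-1) < p` for `n ≥ 3`, `p ∈ (0,1)`. -/
theorem hot_hand_bias (n : ℕ) (hn : 3 ≤ n) (p : ℝ) (hp0 : 0 < p) (hp1 : p < 1) :
    p / (1 - (1 - p) ^ (n - 1)) + (p - 1) / ((n : ℝ) - 1) < p := by
  obtain ⟨k, rfl⟩ : ∃ k, n = k + 2 := ⟨n - 2, by omega⟩
  have hk : 1 ≤ k := by omega
  have hq0 : (0:ℝ) < 1 - p := by linarith
  have hq1 : 1 - p < 1 := by linarith
  have hsub : k + 2 - 1 = k + 1 := by omega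
  rw [hsub]
  have hqm : (1 - p) ^ (k + 1) < 1 := pow_lt_one₀ hq0.le hq1 (Nat.succ_ne_zero k)
  have hden : (0:ℝ) < 1 - (1 - p) ^ (k + 1) := by linarith
  have hm : (0:ℝ) < (k : ℝ) + 1 := by positivity
  have hcast : ((k + 2 : ℕ) : ℝ) - 1 = (k : ℝ) + 1 := by push_cast; ring
  rw [hcast]
  set S := ∑ i ∈ Finset.range (k + 1), (1 - p) ^ i with hSdef
  have h := geom_sum_mul (1 - p) (k + 1)
  rw [← hSdef] at h
  have hS' : p * S = 1 - (1 - p) ^ (k + 1) := by linear_combination -h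
  have hkey : ((k : ℝ) + 1) * (1 - p) ^ k < S := by
    have hlt : ∑ i ∈ Finset.range (k + 1), (1 - p) ^ k
        < ∑ i ∈ Finset.range (k + 1), (1 - p) ^ i :=
      Finset.sum_lt_sum
        (fun i hi => pow_le_pow_of_le_one hq0.le hq1.le
          (by simp only [Finset.mem_range] at hi; omega))
        ⟨0, Finset.mem_range.mpr (Nat.succ_pos k), by
          simpa using pow_lt_one₀ hq0.le hq1 (by omega)⟩
    simpa [Finset.sum_const, nsmul_eq_mul, add_comm] using hlt
  have h2 : 0 < p * (1 - p) * (S - ((k : ℝ) + 1) * (1 - p) ^ k) :=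
    mul_pos (mul_pos hp0 hq0) (by linarith)
  rw [div_add_div _ _ hden.ne' hm.ne', div_lt_iff₀ (mul_pos hden hm), ← sub_pos]
  have hid : p * ((1 - (1 - p) ^ (k + 1)) * ((k : ℝ) + 1))
      - (p * ((k : ℝ) + 1) + (p - 1) * (1 - (1 - p) ^ (k + 1)))
      = p * (1 - p) * (S - ((k : ℝ) + 1) * (1 - p) ^ k) := by
    linear_combination (-(1 - p)) * hS'
  linarith [h2, hid]
end
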